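/- Under the pairing {f, g} = res_0(σ_{−1}(f)·g) on R × R, the orthogonal complement of R^+ is exactly R^+: one has {f, g} = 0 for all f, g ∈ R^+, and conversely any f ∈ R satisfying res_0(σ_{−1}(g)·f) = 0 for all g ∈ R^+ lies in R^+. -/

import Mathlib

open Filter Topology

noncomputable section

variable (p : ℕ) [Fact p.Prime]
variable (L : Type) [NontriviallyNormedField L] [NormedAlgebra ℚ_[p] L]
  [FiniteDimensional ℚ_[p] L]

variable {p L} in
/-- `f = ∑_{i∈ℤ} a_i T^i` (given by its coefficient function `a : ℤ → L`) lies in the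
Robba ring `R`: it converges on some annulus `0 < v_p(T) ≤ r`, i.e. for every radius
`t` with `r₀ ≤ t < 1` one has `‖a_i‖·t^i → 0` as `i → ±∞`. -/
def IsRobba (a : ℤ → L) : Prop :=
  ∃ r₀ : ℝ, 0 < r₀ ∧ r₀ < 1 ∧ ∀ t : ℝ, r₀ ≤ t → t < 1 →
    Tendsto (fun i : ℤ => ‖a i‖ * t ^ i) (cocompact ℤ) (𝓝 0)

variable {p L} in
/-- `f ∈ R^+ ⊆ R`: a power series `∑_{i≥0} a_i T^i` converging on the open unit disk. -/
def IsRobbaPlus (a : ℤ → L) : Prop :=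
  IsRobba a ∧ ∀ i : ℤ, i < 0 → a i = 0

/-- The generalized binomial coefficient `binom(z, n) = z(z-1)⋯(z-n+1)/n!` in `L`. -/
def genChoose (z : ℤ) (n : ℕ) : L :=
  (∏ j ∈ Finset.range n, ((z : L) - (j : L))) / (n.factorial : L)

variable {p L} in
/-- The coefficients of `σ₋₁(f)(T) = f((1+T)⁻¹ - 1)`: using
`((1+T)⁻¹ - 1)^i = (-1)^i T^i (1+T)^{-i}`, the `k`-th coefficient is
`∑_{i ≤ k} a_i·(-1)^i·binom(-i, k-i)`. -/
def sigmaNegOne (a : ℤ → L) : ℤ → L := fun k =>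
  ∑' i : ℤ, if i ≤ k then a i * ((-1 : L) ^ i) * genChoose L (-i) ((k - i).toNat) else 0

variable {p L} in
/-- The Cauchy product of two Laurent series. -/
def lmul (a b : ℤ → L) : ℤ → L := fun k => ∑' i : ℤ, a i * b (k - i)

variable {p L} in
/-- `res₀(f)`: the coefficient of `T⁻¹` in `f/(1+T) = f·∑_{m≥0}(-1)^m T^m`, i.e.
`∑_{m≥0} (-1)^m a_{-1-m}`. -/
def res0 (a : ℤ → L) : L := ∑' m : ℕ, ((-1 : L) ^ m) * a (-1 - (m : ℤ))

/-!
On `R⁺ × R⁺` the pairing vanishes because `σ₋₁` and the product preserve `R⁺`, while `res₀` only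
reads negative coefficients. Conversely, `res₀(T^n (1 + T) f)` telescopes to the coefficient
`f_{-1-n}`, so it suffices to find `g ∈ R⁺` with `σ₋₁(g) = T^n + T^{n+1}`. Written out
coefficientwise this is a unitriangular linear system; its solution has subexponential growth,
which puts `g` in `R⁺`.
-/

section TriangularSolve

variable {R : Type*} [Ring R]

def triangularSolve (c : ℕ → ℕ → R) (b : ℕ → R) : ℕ → R
  | k => b k - ∑ a : Fin k, triangularSolve c b a * c a k
decreasing_by exact a.isLt

theorem sum_triangularSolve_mul {c : ℕ → ℕ → R} (hc : ∀ k, c k k = 1) (b : ℕ → R) (k : ℕ) :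
    ∑ a ∈ Finset.range (k + 1), triangularSolve c b a * c a k = b k := by
  rw [Finset.sum_range_succ, hc, mul_one, triangularSolve, ← Fin.sum_univ_eq_sum_range
    (fun a => triangularSolve c b a * c a k)]
  abel

theorem triangularSolve_mem {S : Type*} [SetLike S R] [SubringClass S R] (s : S)
    {c : ℕ → ℕ → R} {b : ℕ → R} (hc : ∀ a k, c a k ∈ s) (hb : ∀ k, b k ∈ s) (k : ℕ) :
    triangularSolve c b k ∈ s := by
  induction k using Nat.strong_induction_on with
  | _ k ih =>
    rw [triangularSolve]
    exact sub_mem (hb k) (sum_mem fun a _ => mul_mem (ih a a.isLt) (hc a k))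

end TriangularSolve

theorem norm_le_one_of_pow_eq_self {R : Type*} [NormedDivisionRing R] {x : R} {m : ℕ}
    (hm : 1 < m) (hx : x ^ m = x) : ‖x‖ ≤ 1 := by
  by_contra! h
  have := lt_self_pow₀ h hm
  rw [← norm_pow, hx] at this
  exact this.false

theorem neg_one_pow_mul_choose_sub_two (j : ℕ) :
    (-1) ^ j * Ring.choose ((j : ℤ) - 2) j =
      (if j = 0 then 1 else 0) + (if j = 1 then 1 else 0) := by
  match j with
  | 0 => simp
  | 1 => norm_num [Ring.choose_one_right]
  | m + 2 =>
    rw [show ((m + 2 : ℕ) : ℤ) - 2 = m by push_cast; ring, Ring.choose_natCast,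
      Nat.choose_eq_zero_of_lt (by omega)]
    simp

theorem sum_range_choose_mul_choose_neg (n k : ℕ) :
    ∑ a ∈ Finset.range (k + 1), (a.choose n : ℤ) * Ring.choose (-(a : ℤ)) (k - a) =
      (if k = n then 1 else 0) + (if k = n + 1 then 1 else 0) := by
  rcases lt_or_ge k n with hk | hk
  · rw [Finset.sum_eq_zero fun a ha => by
      rw [Nat.choose_eq_zero_of_lt (by simp at ha; omega), Nat.cast_zero, zero_mul]]
    simp [hk.ne, (hk.trans (Nat.lt_succ_self n)).ne]
  obtain ⟨j, rfl⟩ := Nat.exists_eq_add_of_le hk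
  rw [show n + j + 1 = n + (j + 1) by ring, Finset.sum_range_add, Finset.sum_eq_zero fun a ha => by
      rw [Nat.choose_eq_zero_of_lt (by simpa using ha), Nat.cast_zero, zero_mul], zero_add]
  -- `(n + b).choose n = (-1)^b * binom(-n-1, b)` turns the sum into a Chu–Vandermonde convolution.
  have hterm : ∀ b ∈ Finset.range (j + 1),
      (((n + b).choose n : ℕ) : ℤ) * Ring.choose (-((n + b : ℕ) : ℤ)) (n + j - (n + b)) =
        (-1) ^ j * (Ring.choose (-((n : ℤ) + 1)) b * Ring.choose ((n : ℤ) + j - 1) (j - b)) := by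
    intro b hb
    have hbj : b ≤ j := Nat.lt_succ_iff.mp (Finset.mem_range.mp hb)
    rw [Ring.choose_neg, Ring.choose_neg, show n + j - (n + b) = j - b by omega,
      show (n : ℤ) + 1 + b - 1 = ((n + b : ℕ) : ℤ) by push_cast; ring,
      show ((n + b : ℕ) : ℤ) + ((j - b : ℕ) : ℤ) - 1 = (n : ℤ) + j - 1 by push_cast [hbj]; ring,
      Ring.choose_natCast, Nat.choose_symm_add, Units.smul_def, Units.smul_def,
      Int.coe_negOnePow_natCast, Int.coe_negOnePow_natCast, smul_eq_mul, smul_eq_mul,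
      ← pow_sub_mul_pow (-1 : ℤ) hbj]
    ring_nf
    rw [pow_mul', neg_one_sq, one_pow, mul_one]
  rw [Finset.sum_congr rfl hterm, ← Finset.mul_sum,
    ← Finset.Nat.sum_antidiagonal_eq_sum_range_succ_mk (fun ij =>
      Ring.choose (-((n : ℤ) + 1)) ij.1 * Ring.choose ((n : ℤ) + j - 1) ij.2),
    ← Ring.add_choose_eq _ (Commute.all _ _),
    show -((n : ℤ) + 1) + (n + j - 1) = j - 2 by ring, neg_one_pow_mul_choose_sub_two]
  simp

theorem tendsto_norm_natCast_choose_mul_pow {R : Type*} [SeminormedRing R] [NormOneClass R]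
    (n : ℕ) {t : ℝ} (ht0 : 0 < t) (ht1 : t < 1) :
    Tendsto (fun a : ℕ => ‖(a.choose n : R)‖ * t ^ a) atTop (𝓝 0) := by
  have hbound (a : ℕ) : ‖(a.choose n : R)‖ ≤ (a : ℝ) ^ n :=
    calc ‖(a.choose n : R)‖ ≤ a.choose n := by simpa using Nat.norm_cast_le (α := R) _
      _ ≤ (a : ℝ) ^ n := by exact_mod_cast Nat.choose_le_pow a n
  exact squeeze_zero (fun a => by positivity)
    (fun a => mul_le_mul_of_nonneg_right (hbound a) (by positivity))
    (tendsto_pow_const_mul_const_pow_of_abs_lt_one n (by rwa [abs_of_pos ht0]))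

theorem norm_le_one_of_mem_fieldRange_zmod {R : Type*} [NormedDivisionRing R] {q : ℕ}
    [Fact q.Prime] [CharP R q] {x : R} (hx : x ∈ (ZMod.castHom (dvd_refl q) R).fieldRange) :
    ‖x‖ ≤ 1 := by
  obtain ⟨z, rfl⟩ := hx
  exact norm_le_one_of_pow_eq_self (Fact.out : q.Prime).one_lt
    (by rw [← map_pow, ZMod.pow_card])

section

variable {L}

theorem genChoose_eq_choose [CharZero L] (z : ℤ) (m : ℕ) :
    genChoose L z m = ((Ring.choose z m : ℤ) : L) := by
  have h := Ring.descPochhammer_eq_factorial_smul_choose z m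
  rw [← Polynomial.eval_eq_smeval, descPochhammer_eval_eq_prod_range, nsmul_eq_mul] at h
  have hL := congrArg (fun x : ℤ => (x : L)) h
  push_cast at hL
  rw [genChoose, hL, mul_div_cancel_left₀ _ (Nat.cast_ne_zero.mpr m.factorial_ne_zero)]

theorem genChoose_mem (K : Subfield L) (z : ℤ) (m : ℕ) : genChoose L z m ∈ K :=
  div_mem (prod_mem fun j _ => sub_mem (intCast_mem K z) (natCast_mem K j)) (natCast_mem K _)

theorem sum_range_natCast_choose_mul_genChoose [CharZero L] (n k : ℕ) :
    ∑ a ∈ Finset.range (k + 1), (a.choose n : L) * genChoose L (-(a : ℤ)) (k - a) =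
      (if k = n then 1 else 0) + (if k = n + 1 then 1 else 0) := by
  have h := congrArg (fun x : ℤ => (x : L)) (sum_range_choose_mul_choose_neg n k)
  push_cast [apply_ite (fun x : ℤ => (x : L))] at h
  simpa only [genChoose_eq_choose] using h

/-- In characteristic zero the solution is `a ↦ (a choose n)`; in characteristic `q` the
division by `m!` in `genChoose` is degenerate, but the system is still unitriangular and its
solution lies in the prime field, whose elements have norm at most `1`. -/
theorem exists_sum_mul_genChoose_eq (n : ℕ) :
    ∃ y : ℕ → L, (∀ t : ℝ, 0 < t → t < 1 → Tendsto (fun a => ‖y a‖ * t ^ a) atTop (𝓝 0)) ∧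
      ∀ k : ℕ, ∑ a ∈ Finset.range (k + 1), y a * genChoose L (-(a : ℤ)) (k - a) =
        (if k = n then 1 else 0) + (if k = n + 1 then 1 else 0) := by
  rcases CharP.char_is_prime_or_zero L (ringChar L) with hq | hq
  · have : Fact (ringChar L).Prime := ⟨hq⟩
    set K := (ZMod.castHom (dvd_refl (ringChar L)) L).fieldRange
    let b : ℕ → L := fun k => (if k = n then 1 else 0) + (if k = n + 1 then 1 else 0)
    let c : ℕ → ℕ → L := fun a k => genChoose L (-(a : ℤ)) (k - a)
    have hb (k : ℕ) : b k ∈ K := add_mem (by split_ifs <;> simp) (by split_ifs <;> simp)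
    have hle (a : ℕ) : ‖triangularSolve c b a‖ ≤ 1 := norm_le_one_of_mem_fieldRange_zmod
      (triangularSolve_mem K (fun _ _ => genChoose_mem K _ _) hb a)
    refine ⟨triangularSolve c b, fun t ht0 ht1 => ?_,
      sum_triangularSolve_mul (fun k => by simp [c, genChoose]) b⟩
    exact squeeze_zero (fun a => by positivity)
      (fun a => mul_le_of_le_one_left (by positivity) (hle a))
      (tendsto_pow_atTop_nhds_zero_of_lt_one ht0.le ht1)
  · have : CharP L 0 := hq ▸ ringChar.charP L
    have : CharZero L := CharP.charP_to_charZero L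
    exact ⟨fun a => (a.choose n : L), fun t => tendsto_norm_natCast_choose_mul_pow n,
      sum_range_natCast_choose_mul_genChoose n⟩

theorem sigmaNegOne_apply_of_neg {f : ℤ → L} (hf : ∀ i < 0, f i = 0) {k : ℤ} (hk : k < 0) :
    sigmaNegOne f k = 0 := by
  refine (tsum_congr fun i => ?_).trans tsum_zero
  split_ifs with hik
  · rw [hf i (by omega), zero_mul, zero_mul]
  · rfl

theorem sigmaNegOne_apply_natCast {f : ℤ → L} (hf : ∀ i < 0, f i = 0) (k : ℕ) :
    sigmaNegOne f k =
      ∑ a ∈ Finset.range (k + 1), f a * (-1 : L) ^ a * genChoose L (-(a : ℤ)) (k - a) := by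
  rw [sigmaNegOne, tsum_eq_sum (s := (Finset.range (k + 1)).map Nat.castEmbedding),
    Finset.sum_map]
  · refine Finset.sum_congr rfl fun a ha => ?_
    have hak : a ≤ k := Nat.lt_succ_iff.mp (Finset.mem_range.mp ha)
    rw [Nat.castEmbedding_apply, if_pos (by exact_mod_cast hak), zpow_natCast,
      show ((k : ℤ) - a).toNat = k - a by omega]
  · intro i hi
    split_ifs with hik
    · have hi0 : i < 0 := by
        by_contra! h
        exact hi (Finset.mem_map.mpr ⟨i.toNat, Finset.mem_range.mpr (by omega),
          by simp [Nat.castEmbedding_apply, h]⟩)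
      rw [hf i hi0, zero_mul, zero_mul]
    · rfl

theorem lmul_apply_of_neg {f g : ℤ → L} (hf : ∀ i < 0, f i = 0) (hg : ∀ i < 0, g i = 0)
    {k : ℤ} (hk : k < 0) : lmul f g k = 0 := by
  refine (tsum_congr fun i => ?_).trans tsum_zero
  rcases lt_or_ge i 0 with hi | hi
  · rw [hf i hi, zero_mul]
  · rw [hg (k - i) (by omega), mul_zero]

theorem res0_eq_zero {f : ℤ → L} (hf : ∀ i < 0, f i = 0) : res0 f = 0 :=
  (tsum_congr fun m => by rw [hf _ (by omega), mul_zero]).trans tsum_zero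

theorem isRobbaPlus_of_tendsto {f : ℤ → L} (hf : ∀ i < 0, f i = 0)
    (h : ∀ t : ℝ, 0 < t → t < 1 → Tendsto (fun j : ℕ => ‖f j‖ * t ^ j) atTop (𝓝 0)) :
    IsRobbaPlus f := by
  refine ⟨⟨1 / 2, by norm_num, by norm_num, fun t ht ht1 => ?_⟩, hf⟩
  rw [cocompact_eq_atBot_atTop, tendsto_sup]
  constructor
  · refine tendsto_const_nhds.congr' ?_
    filter_upwards [eventually_lt_atBot 0] with i hi
    rw [hf i hi, norm_zero, zero_mul]
  · rw [← Nat.map_cast_int_atTop, tendsto_map'_iff]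
    simpa only [Function.comp_def, zpow_natCast] using h t (by linarith) ht1

theorem exists_isRobbaPlus_sigmaNegOne_eq (n : ℕ) :
    ∃ g : ℤ → L, IsRobbaPlus g ∧
      sigmaNegOne g = fun k : ℤ => (if k = n then 1 else 0) + (if k = n + 1 then 1 else 0) := by
  obtain ⟨y, hy, hsum⟩ := exists_sum_mul_genChoose_eq (L := L) n
  set g : ℤ → L := fun i => if 0 ≤ i then (-1) ^ i.toNat * y i.toNat else 0
  have hg0 : ∀ i < 0, g i = 0 := fun i hi => if_neg (by omega)
  have hgnat (a : ℕ) : g a = (-1) ^ a * y a := by simp [g]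
  refine ⟨g, isRobbaPlus_of_tendsto hg0 fun t ht0 ht1 => ?_, funext fun k => ?_⟩
  · simpa [hgnat] using hy t ht0 ht1
  rcases lt_or_ge k 0 with hk | hk
  · rw [sigmaNegOne_apply_of_neg hg0 hk, if_neg (by omega), if_neg (by omega), add_zero]
  obtain ⟨k, rfl⟩ := Int.eq_ofNat_of_zero_le hk
  have hsign (a : ℕ) : (-1 : L) ^ a * y a * (-1) ^ a = y a := by
    rw [mul_right_comm, ← mul_pow, neg_one_mul, neg_neg, one_pow, one_mul]
  simp only [sigmaNegOne_apply_natCast hg0, hgnat, hsign, hsum]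
  push_cast [Nat.cast_inj]
  simp only [← Nat.cast_succ, Nat.cast_inj]

theorem lmul_pair_apply (n : ℤ) (f : ℤ → L) (k : ℤ) :
    lmul (fun i : ℤ => (if i = n then 1 else 0) + (if i = n + 1 then 1 else 0)) f k =
      f (k - n) + f (k - n - 1) := by
  rw [lmul, tsum_eq_sum (s := {n, n + 1}), Finset.sum_pair (by omega)]
  · simp only [if_pos, if_neg (show n ≠ n + 1 by omega), if_neg (show n + 1 ≠ n by omega)]
    ring_nf
  · intro i hi
    simp only [Finset.mem_insert, Finset.mem_singleton, not_or] at hi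
    rw [if_neg hi.1, if_neg hi.2, add_zero, zero_mul]

theorem IsRobba.summable_norm_sub_natCast {f : ℤ → L} (hf : IsRobba f) (c : ℤ) :
    Summable fun m : ℕ => ‖f (c - m)‖ := by
  obtain ⟨r, hr0, hr1, H⟩ := hf
  have hbot : Tendsto (fun i : ℤ => ‖f i‖ * r ^ i) atBot (𝓝 0) :=
    (H r le_rfl hr1).mono_left (cocompact_eq_atBot_atTop (α := ℤ) ▸ le_sup_left)
  have hsub : Tendsto (fun m : ℕ => c - (m : ℤ)) atTop atBot :=
    tendsto_atBot_add_const_left _ c (tendsto_neg_atTop_atBot.comp tendsto_natCast_atTop_atTop)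
  refine Summable.of_norm_bounded_eventually_nat
    ((summable_geometric_of_lt_one hr0.le hr1).mul_left (r ^ (-c))) ?_
  filter_upwards [(hbot.comp hsub).eventually_le_const one_pos] with m hm
  have hpos : 0 < r ^ (c - m) := zpow_pos hr0 _
  rw [norm_norm, ← zpow_natCast, ← zpow_add₀ hr0.ne', show -c + m = -(c - m) by ring, zpow_neg,
    ← one_div, le_div_iff₀ hpos]
  exact hm

theorem hasSum_sub_succ_of_summable_norm {E : Type*} [SeminormedAddCommGroup E] {a : ℕ → E}
    (h : Summable fun m => ‖a m‖) : HasSum (fun m => a m - a (m + 1)) (a 0) := by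
  let ι := UniformSpace.Completion.toCompl (α := E)
  have hs : Summable fun m => ι (a m) :=
    Summable.of_norm (by simpa [ι, UniformSpace.Completion.norm_coe] using h)
  have htel : HasSum (fun m => ι (a m) - ι (a (m + 1))) (ι (a 0)) := by
    simpa using hs.hasSum.sub ((hasSum_nat_add_iff' 1).mpr hs.hasSum)
  rw [← (UniformSpace.Completion.isDenseInducing_toCompl E).isInducing.hasSum_iff]
  simpa [Function.comp_def, ι, UniformSpace.Completion.coe_sub] using htel

theorem res0_shift_add_shift_succ {f : ℤ → L} (hf : IsRobba f) (n : ℤ) :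
    res0 (fun k => f (k - n) + f (k - n - 1)) = f (-1 - n) := by
  set a : ℕ → L := fun m => (-1) ^ m * f (-1 - n - m)
  have ha : Summable fun m => ‖a m‖ := by
    simpa [a] using hf.summable_norm_sub_natCast (-1 - n)
  have hterm (m : ℕ) : (-1 : L) ^ m * (f (-1 - m - n) + f (-1 - m - n - 1)) = a m - a (m + 1) := by
    simp only [a, pow_succ]
    push_cast
    ring_nf
  simp only [res0, hterm, (hasSum_sub_succ_of_summable_norm ha).tsum_eq, a]
  simp

end

/-- **Statement 14.** Under the pairing `{f,g} = res₀(σ₋₁(f)·g)` on `R × R`, the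
orthogonal complement of `R^+` is exactly `R^+`: one has `{f,g} = 0` for all
`f, g ∈ R^+`, and conversely any `f ∈ R` satisfying `res₀(σ₋₁(g)·f) = 0` for all
`g ∈ R^+` lies in `R^+`. -/
theorem robbaPlus_orthogonal_complement_self :
    (∀ f g : ℤ → L, IsRobbaPlus f → IsRobbaPlus g →
      res0 (lmul (sigmaNegOne f) g) = 0) ∧
    (∀ f : ℤ → L, IsRobba f →
      (∀ g : ℤ → L, IsRobbaPlus g → res0 (lmul (sigmaNegOne g) f) = 0) →
      IsRobbaPlus f) := by
  refine ⟨fun f g hf hg => res0_eq_zero fun k hk =>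
    lmul_apply_of_neg (fun _ => sigmaNegOne_apply_of_neg hf.2) hg.2 hk,
    fun f hf H => ⟨hf, fun i hi => ?_⟩⟩
  obtain ⟨n, rfl⟩ : ∃ n : ℕ, i = -1 - n := ⟨(-1 - i).toNat, by omega⟩
  obtain ⟨g, hg, hσg⟩ := exists_isRobbaPlus_sigmaNegOne_eq (L := L) n
  have hpair := H g hg
  rwa [hσg, funext (lmul_pair_apply (n : ℤ) f), res0_shift_add_shift_succ hf] at hpair
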